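/- Let u : I × X → [−c/2, c/2] be a family of bounded functions indexed by I, with X ∼ D^m. Let R = E_{X,σ}[sup_{i∈I} |(1/m)Σ_j σ_j u(i,X_j)|] denote the Rademacher average. Then with probability at least 1 − δ over X, sup_{i∈I} | E_D[u(i,·)] − (1/m)Σ_j u(i,X_j) | ≤ 2R + c·sqrt(ln(1/δ)/(2m)). -/

import Mathlib

/-!
Write `Z X = ⨆ i, |E u_i - (1/m) ∑ⱼ u_i(Xⱼ)|`. Replacing `E u_i` by the empirical mean of an
independent ghost sample `Y` and using Jensen's inequality bounds `E Z` by the expected supremum of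
`|(1/m) ∑ⱼ (u_i(Yⱼ) - u_i(Xⱼ))|`. For every sign vector `σ`, exchanging `Xⱼ` and `Yⱼ` wherever
`σⱼ = -1` preserves the law of `(X, Y)` and inserts the signs `σⱼ`; the triangle inequality then
gives `E Z ≤ 2R`.

Changing one coordinate of `X` moves `Z` by at most `c/m`, so by McDiarmid's inequality
`Z ≥ E Z + ε` has probability at most `exp (-2 ε² m / c²) = δ`. McDiarmid's inequality is proved by
induction on the number of coordinates: conditionally on the others, the first coordinate moves
`f` within an interval of length `d`, so Hoeffding's lemma makes the conditional increment
sub-Gaussian with parameter `(d/2)²`, and the parameters add up over the coordinates.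
-/

open MeasureTheory

/-- The distribution of a Rademacher sign: uniform on {1, -1} ⊆ ℝ. -/
noncomputable def signMeasure : Measure ℝ :=
  (1/2 : ENNReal) • Measure.dirac 1 + (1/2 : ENNReal) • Measure.dirac (-1)

open ProbabilityTheory Real
open scoped NNReal

theorem ProbabilityTheory.hasSubgaussianMGF_prod_of_sections {Ω₁ Ω₂ : Type*}
    [MeasurableSpace Ω₁] [MeasurableSpace Ω₂] {μ : Measure Ω₁} {ν : Measure Ω₂}
    [SFinite μ] [SFinite ν] {F : Ω₁ × Ω₂ → ℝ} {g : Ω₂ → ℝ} {A : ℝ} {c₁ c₂ : ℝ≥0}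
    (hF : ∀ t, Integrable (fun q => exp (t * (F q - A))) (μ.prod ν))
    (h_inner : ∀ y, HasSubgaussianMGF (fun x => F (x, y) - g y) c₁ μ)
    (h_outer : HasSubgaussianMGF (fun y => g y - A) c₂ ν) :
    HasSubgaussianMGF (fun q => F q - A) (c₁ + c₂) (μ.prod ν) where
  integrable_exp_mul := hF
  mgf_le t := by
    have h_section (y : Ω₂) : ∫ x, exp (t * (F (x, y) - A)) ∂μ
        = mgf (fun x => F (x, y) - g y) μ t * exp (t * (g y - A)) := by
      rw [← mgf_add_const]
      simp only [sub_add_sub_cancel, mgf]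
    calc mgf (fun q => F q - A) (μ.prod ν) t
        = ∫ y, ∫ x, exp (t * (F (x, y) - A)) ∂μ ∂ν := integral_prod_symm _ (hF t)
      _ ≤ ∫ y, exp (c₁ * t ^ 2 / 2) * exp (t * (g y - A)) ∂ν := by
        refine integral_mono_of_nonneg (ae_of_all _ fun y => by positivity)
          ((h_outer.integrable_exp_mul t).const_mul _) (ae_of_all _ fun y => ?_)
        dsimp only
        rw [h_section]
        exact mul_le_mul_of_nonneg_right ((h_inner y).mgf_le t) (exp_pos _).le
      _ = exp (c₁ * t ^ 2 / 2) * mgf (fun y => g y - A) ν t := integral_const_mul _ _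
      _ ≤ exp (c₁ * t ^ 2 / 2) * exp (c₂ * t ^ 2 / 2) := by
        gcongr
        exact h_outer.mgf_le t
      _ = exp (↑(c₁ + c₂) * t ^ 2 / 2) := by
        rw [← exp_add]
        push_cast
        ring_nf

theorem mem_Icc_iInf_add_of_forall_sub_le {α : Type*} [Nonempty α] {φ : α → ℝ} {d : ℝ}
    (hd : ∀ x y, φ x - φ y ≤ d) (x : α) : φ x ∈ Set.Icc (⨅ y, φ y) ((⨅ y, φ y) + d) := by
  have hφ : BddBelow (Set.range φ) :=
    ⟨φ x - d, Set.forall_mem_range.2 fun y => by linarith [hd x y]⟩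
  exact ⟨ciInf_le hφ x, by linarith [le_ciInf fun y => (by linarith [hd x y] : φ x - d ≤ φ y)]⟩

section McDiarmid

variable {𝒳 : Type*} [MeasurableSpace 𝒳] {μ : Measure 𝒳} [IsProbabilityMeasure μ]

theorem hasSubgaussianMGF_sub_integral_of_forall_sub_le {f : 𝒳 → ℝ} (hf : Measurable f)
    {d : ℝ≥0} (hd : ∀ x y, f x - f y ≤ d) :
    HasSubgaussianMGF (fun x => f x - ∫ y, f y ∂μ) ((d / 2) ^ 2) μ := by
  have := nonempty_of_isProbabilityMeasure μ
  simpa using hasSubgaussianMGF_of_mem_Icc hf.aemeasurable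
    (ae_of_all μ (mem_Icc_iInf_add_of_forall_sub_le hd))

theorem measurable_fin_cons {n : ℕ} :
    Measurable fun q : 𝒳 × (Fin n → 𝒳) => (Fin.cons q.1 q.2 : Fin (n + 1) → 𝒳) :=
  measurable_pi_lambda _ fun i => Fin.cases (by simpa using measurable_fst)
    (fun j => by simpa using measurable_snd.eval) i

theorem integral_pi_fin_succ {n : ℕ} {f : (Fin (n + 1) → 𝒳) → ℝ}
    (hf : Integrable f (Measure.pi fun _ => μ)) :
    ∫ X, f X ∂(Measure.pi fun _ => μ)
      = ∫ X, ∫ x, f (Fin.cons x X) ∂μ ∂(Measure.pi fun _ : Fin n => μ) := by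
  have e := (measurePreserving_piFinSuccAbove (fun _ : Fin (n + 1) => μ) 0).symm
  rw [← e.integral_comp', integral_prod_symm]
  · simp [MeasurableEquiv.piFinSuccAbove, Fin.insertNthEquiv]
  · exact e.integrable_comp_emb (MeasurableEquiv.measurableEmbedding _) |>.2 hf

theorem integral_cons_sub_integral_cons_update_le {n : ℕ} {f : (Fin (n + 1) → 𝒳) → ℝ}
    (hf : Measurable f) {M : ℝ} (hM : ∀ X, |f X| ≤ M) {d : ℝ}
    (hd : ∀ X j v, f X - f (Function.update X j v) ≤ d) (X : Fin n → 𝒳) (j : Fin n) (v : 𝒳) :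
    ∫ x, f (Fin.cons x X) ∂μ - ∫ x, f (Fin.cons x (Function.update X j v)) ∂μ ≤ d := by
  have hint (Y : Fin n → 𝒳) : Integrable (fun x => f (Fin.cons x Y)) μ :=
    .of_bound (hf.comp (measurable_fin_cons.comp measurable_prodMk_right)).aestronglyMeasurable M
      (ae_of_all _ fun x => hM _)
  rw [← integral_sub (hint X) (hint _)]
  refine (integral_mono ((hint X).sub (hint _)) (integrable_const d) fun x => ?_).trans (by simp)
  simpa [Fin.cons_update] using hd (Fin.cons x X) j.succ v

theorem hasSubgaussianMGF_sub_integral_pi_of_bounded_differences {d : ℝ≥0} :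
    ∀ {n : ℕ} {f : (Fin n → 𝒳) → ℝ} {M : ℝ}, Measurable f → (∀ X, |f X| ≤ M) →
      (∀ X j v, f X - f (Function.update X j v) ≤ d) →
      HasSubgaussianMGF (fun X => f X - ∫ Y, f Y ∂(Measure.pi fun _ => μ)) (n * (d / 2) ^ 2)
        (Measure.pi fun _ => μ)
  | 0, f, M, _, _, _ => by
    have hf : f = fun _ => f default := funext fun X => congrArg f (Subsingleton.elim _ _)
    rw [hf]
    simp
  | n + 1, f, M, hf, hM, hd => by
    set A := ∫ Y, f Y ∂(Measure.pi fun _ => μ)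
    set F : 𝒳 × (Fin n → 𝒳) → ℝ := fun q => f (Fin.cons q.1 q.2)
    set g : (Fin n → 𝒳) → ℝ := fun X => ∫ x, F (x, X) ∂μ
    have hF : Measurable F := hf.comp measurable_fin_cons
    have h_inner (X) : HasSubgaussianMGF (fun x => F (x, X) - g X) ((d / 2) ^ 2) μ :=
      hasSubgaussianMGF_sub_integral_of_forall_sub_le (hF.comp measurable_prodMk_right)
        fun x y => by simpa [F, Fin.update_cons_zero] using hd (Fin.cons x X) 0 y
    have h_outer : HasSubgaussianMGF (fun X => g X - A) (n * (d / 2) ^ 2)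
        (Measure.pi fun _ => μ) := by
      have hA : A = ∫ X, g X ∂(Measure.pi fun _ => μ) :=
        integral_pi_fin_succ (.of_bound hf.aestronglyMeasurable M (ae_of_all _ hM))
      rw [hA]
      refine hasSubgaussianMGF_sub_integral_pi_of_bounded_differences
        hF.stronglyMeasurable.integral_prod_left'.measurable (M := M) (fun X => ?_)
        (integral_cons_sub_integral_cons_update_le hf hM hd)
      simpa using norm_integral_le_of_norm_le_const (μ := μ) (f := fun x => F (x, X))
        (ae_of_all _ fun x => hM _)
    have h_exp (t : ℝ) :
        Integrable (fun q => exp (t * (F q - A))) (μ.prod (Measure.pi fun _ => μ)) :=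
      integrable_exp_mul_of_mem_Icc (hF.sub_const A).aemeasurable (a := -M - A) (b := M - A)
        (ae_of_all _ fun q => by
          have := abs_le.1 (hM (Fin.cons q.1 q.2))
          simp only [Set.mem_Icc, F]
          constructor <;> linarith)
    have e := measurePreserving_piFinSuccAbove (fun _ : Fin (n + 1) => μ) 0
    have h := HasSubgaussianMGF.of_map e.measurable.aemeasurable
      (e.map_eq ▸ hasSubgaussianMGF_prod_of_sections h_exp h_inner h_outer)
    convert h using 2
    · simp [F, MeasurableEquiv.piFinSuccAbove]
    · push_cast
      ring

theorem measureReal_sub_integral_pi_ge_le_of_bounded_differences {n : ℕ}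
    {f : (Fin n → 𝒳) → ℝ} (hf : Measurable f) {M : ℝ} (hM : ∀ X, |f X| ≤ M) {d : ℝ≥0}
    (hd : ∀ X j v, f X - f (Function.update X j v) ≤ d) {ε : ℝ} (hε : 0 ≤ ε) :
    (Measure.pi fun _ : Fin n => μ).real {X | ε ≤ f X - ∫ Y, f Y ∂(Measure.pi fun _ => μ)}
      ≤ exp (-2 * ε ^ 2 / (n * d ^ 2)) := by
  refine ((hasSubgaussianMGF_sub_integral_pi_of_bounded_differences hf hM hd).measure_ge_le
    hε).trans_eq ?_
  rw [show (2 : ℝ) * ((n * (d / 2) ^ 2 : ℝ≥0) : ℝ) = n * d ^ 2 / 2 by push_cast; ring,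
    div_div_eq_mul_div]
  ring_nf

end McDiarmid

instance : IsProbabilityMeasure signMeasure :=
  ⟨by simp [signMeasure, ENNReal.inv_two_add_inv_two]⟩

theorem ae_signMeasure : ∀ᵐ s ∂signMeasure, s = 1 ∨ s = -1 := by
  simp [signMeasure, ae_add_measure_iff]

theorem ae_pi_signMeasure {ι : Type*} [Fintype ι] :
    ∀ᵐ σ ∂(Measure.pi fun _ : ι => signMeasure), ∀ j, σ j = 1 ∨ σ j = -1 :=
  ae_all_iff.2 fun j =>
    (measurePreserving_eval (fun _ => signMeasure) j).quasiMeasurePreserving.ae ae_signMeasure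

theorem ofReal_one_sub_le_of_measureReal_compl_le {Ω : Type*} [MeasurableSpace Ω]
    {P : Measure Ω} [IsProbabilityMeasure P] {s : Set Ω} (hs : MeasurableSet s) {δ : ℝ}
    (h : P.real sᶜ ≤ δ) : ENNReal.ofReal (1 - δ) ≤ P s := by
  rw [← ofReal_measureReal]
  exact ENNReal.ofReal_le_ofReal (by linarith [probReal_compl_eq_one_sub (μ := P) hs])

theorem norm_iSup_abs_le {I : Type*} [Nonempty I] {a : I → ℝ} {C : ℝ} (h : ∀ i, |a i| ≤ C) :
    ‖⨆ i, |a i|‖ ≤ C := by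
  rw [Real.norm_of_nonneg (Real.iSup_nonneg fun i => abs_nonneg _)]
  exact ciSup_le h

theorem abs_sum_div_le {m : ℕ} (hm : 0 < m) {w : Fin m → ℝ} {C : ℝ} (h : ∀ j, |w j| ≤ C) :
    |(∑ j, w j) / m| ≤ C := by
  rw [abs_div, Nat.abs_cast, div_le_iff₀ (by exact_mod_cast hm)]
  calc |∑ j, w j| ≤ ∑ j, |w j| := Finset.abs_sum_le_sum_abs _ _
    _ ≤ ∑ _j : Fin m, C := Finset.sum_le_sum fun j _ => h j
    _ = C * m := by simp [mul_comm]

theorem integral_iSup_abs_integral_sub_le {Ω : Type*} [MeasurableSpace Ω] {P : Measure Ω}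
    [IsProbabilityMeasure P] {I : Type*} [Fintype I] [Nonempty I] {F : I → Ω → ℝ}
    (hF : ∀ i, Measurable (F i)) {C : ℝ} (hC : ∀ i x, |F i x| ≤ C) :
    ∫ x, ⨆ i, |∫ y, F i y ∂P - F i x| ∂P ≤ ∫ q, ⨆ i, |F i q.2 - F i q.1| ∂(P.prod P) := by
  set G : Ω × Ω → ℝ := fun q => ⨆ i, |F i q.2 - F i q.1|
  have hGm : Measurable G := Measurable.iSup fun i =>
    (((hF i).comp measurable_snd).sub ((hF i).comp measurable_fst)).abs
  have hGb (q : Ω × Ω) : ‖G q‖ ≤ C + C :=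
    norm_iSup_abs_le fun i => (abs_sub _ _).trans (add_le_add (hC _ _) (hC _ _))
  have hG : Integrable G (P.prod P) := .of_bound hGm.aestronglyMeasurable _ (ae_of_all _ hGb)
  rw [integral_prod _ hG]
  refine integral_mono_of_nonneg (ae_of_all _ fun x => Real.iSup_nonneg fun i => abs_nonneg _)
    hG.integral_prod_left (ae_of_all _ fun x => ciSup_le fun i => ?_)
  have hFi : Integrable (F i) P := .of_bound (hF i).aestronglyMeasurable C (ae_of_all _ (hC i))
  calc |∫ y, F i y ∂P - F i x| = |∫ y, (F i y - F i x) ∂P| := by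
        rw [integral_sub hFi (integrable_const _)]; simp
    _ ≤ ∫ y, |F i y - F i x| ∂P := abs_integral_le_integral_abs
    _ ≤ ∫ y, G (x, y) ∂P :=
        integral_mono (hFi.sub (integrable_const _)).abs
          (.of_bound (hGm.comp measurable_prodMk_left).aestronglyMeasurable _
            (ae_of_all _ fun y => hGb _))
          fun y => le_ciSup (f := fun i => |F i y - F i x|) (Finite.bddAbove_range _) i

theorem measurePreserving_piecewise_swap {ι 𝒳 : Type*} [Fintype ι] [MeasurableSpace 𝒳]
    (μ : Measure 𝒳) [SigmaFinite μ] (s : Set ι) [DecidablePred (· ∈ s)] :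
    MeasurePreserving (fun q : (ι → 𝒳) × (ι → 𝒳) => (s.piecewise q.2 q.1, s.piecewise q.1 q.2))
      ((Measure.pi fun _ => μ).prod (Measure.pi fun _ => μ))
      ((Measure.pi fun _ => μ).prod (Measure.pi fun _ => μ)) := by
  have e := measurePreserving_arrowProdEquivProdArrow 𝒳 𝒳 ι (fun _ => μ) (fun _ => μ)
  have swap : MeasurePreserving (fun (w : ι → 𝒳 × 𝒳) j => if j ∈ s then (w j).swap else w j)
      (Measure.pi fun _ => μ.prod μ) (Measure.pi fun _ => μ.prod μ) :=
    measurePreserving_pi _ _ (f := fun j (p : 𝒳 × 𝒳) => if j ∈ s then p.swap else p) fun j => by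
      split_ifs
      exacts [Measure.measurePreserving_swap, .id _]
  convert (e.comp swap).comp e.symm using 1
  ext q j <;> by_cases hj : j ∈ s <;>
    simp [hj, MeasurableEquiv.arrowProdEquivProdArrow, Equiv.arrowProdEquivProdArrow]

theorem sum_sub_sum_piecewise_eq {α : Type*} {m : ℕ} {σ : Fin m → ℝ}
    (hσ : ∀ j, σ j = 1 ∨ σ j = -1) (φ : α → ℝ) (X Y : Fin m → α) :
    (∑ j, φ ({j | σ j = -1}.piecewise X Y j) - ∑ j, φ ({j | σ j = -1}.piecewise Y X j))
      = ∑ j, σ j * φ (Y j) - ∑ j, σ j * φ (X j) := by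
  classical
  rw [← Finset.sum_sub_distrib, ← Finset.sum_sub_distrib]
  refine Finset.sum_congr rfl fun j _ => ?_
  rcases hσ j with h | h <;> norm_num [Set.piecewise, h]
  ring

noncomputable section Rademacher

variable {𝒳 I : Type*} {m : ℕ} {u : I → 𝒳 → ℝ} {c : ℝ}

def rademacherSup (u : I → 𝒳 → ℝ) (X : Fin m → 𝒳) (σ : Fin m → ℝ) : ℝ :=
  ⨆ i, |(∑ j, σ j * u i (X j)) / m|

theorem norm_rademacherSup_le [Nonempty I] (hb : ∀ i x, |u i x| ≤ c / 2) (hm : 0 < m)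
    {σ : Fin m → ℝ} (hσ : ∀ j, σ j = 1 ∨ σ j = -1) (X : Fin m → 𝒳) :
    ‖rademacherSup u X σ‖ ≤ c / 2 :=
  norm_iSup_abs_le fun i => abs_sum_div_le hm fun j => by
    rcases hσ j with h | h <;> simp [h, hb]

variable [MeasurableSpace 𝒳]

def supDeviation (μ : Measure 𝒳) (u : I → 𝒳 → ℝ) (X : Fin m → 𝒳) : ℝ :=
  ⨆ i, |(∫ x, u i x ∂μ) - (∑ j, u i (X j)) / m|

theorem abs_supDeviation_le [Nonempty I] {μ : Measure 𝒳} [IsProbabilityMeasure μ]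
    (hb : ∀ i x, |u i x| ≤ c / 2) (hm : 0 < m) (X : Fin m → 𝒳) : |supDeviation μ u X| ≤ c :=
  norm_iSup_abs_le fun i => (abs_sub _ _).trans <| add_halves c ▸ add_le_add
    (by simpa using norm_integral_le_of_norm_le_const (μ := μ) (f := u i) (ae_of_all _ (hb i)))
    (abs_sum_div_le hm fun j => hb i (X j))

variable [Fintype I]

theorem measurable_supDeviation {μ : Measure 𝒳} (hmeas : ∀ i, Measurable (u i)) :
    Measurable (supDeviation (m := m) μ u) :=
  Measurable.iSup fun i => by have := hmeas i; fun_prop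

theorem measurable_rademacherSup (hmeas : ∀ i, Measurable (u i)) :
    Measurable fun q : (Fin m → 𝒳) × (Fin m → ℝ) => rademacherSup u q.1 q.2 :=
  Measurable.iSup fun i => by have := hmeas i; fun_prop

theorem supDeviation_sub_supDeviation_update_le [Nonempty I] {μ : Measure 𝒳}
    (hb : ∀ i x, |u i x| ≤ c / 2) (X : Fin m → 𝒳) (j : Fin m) (v : 𝒳) :
    supDeviation μ u X - supDeviation μ u (Function.update X j v) ≤ c / m := by
  rw [sub_le_iff_le_add']
  refine ciSup_le fun i => ?_
  have h_update : ∑ k, u i (Function.update X j v k) - ∑ k, u i (X k) = u i v - u i (X j) := by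
    rw [← Finset.sum_sub_distrib, Finset.sum_eq_single j (fun k _ hk => by simp [hk]) (by simp)]
    simp
  calc |∫ x, u i x ∂μ - (∑ k, u i (X k)) / m|
      ≤ |∫ x, u i x ∂μ - (∑ k, u i (Function.update X j v k)) / m|
        + |(∑ k, u i (Function.update X j v k)) / m - (∑ k, u i (X k)) / m| := abs_sub_le _ _ _
    _ ≤ supDeviation μ u (Function.update X j v) + c / m := by
      gcongr
      · exact le_ciSup (f := fun i => |∫ x, u i x ∂μ - (∑ k, u i (Function.update X j v k)) / m|)
          (Finite.bddAbove_range _) i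
      · rw [← sub_div, h_update, abs_div, Nat.abs_cast]
        gcongr
        exact (abs_sub _ _).trans (add_halves c ▸ add_le_add (hb i v) (hb i (X j)))

variable {μ : Measure 𝒳} [IsProbabilityMeasure μ]

theorem integral_iSup_abs_avg_sub_le [Nonempty I] (hmeas : ∀ i, Measurable (u i))
    (hb : ∀ i x, |u i x| ≤ c / 2) (hm : 0 < m) {σ : Fin m → ℝ} (hσ : ∀ j, σ j = 1 ∨ σ j = -1) :
    ∫ q : (Fin m → 𝒳) × (Fin m → 𝒳), ⨆ i, |(∑ j, u i (q.2 j)) / m - (∑ j, u i (q.1 j)) / m|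
        ∂((Measure.pi fun _ : Fin m => μ).prod (Measure.pi fun _ => μ))
      ≤ 2 * ∫ X, rademacherSup u X σ ∂(Measure.pi fun _ => μ) := by
  classical
  set P := Measure.pi fun _ : Fin m => μ
  have hT := measurePreserving_piecewise_swap μ ({j | σ j = -1} : Set (Fin m))
  have hr : Integrable (fun X => rademacherSup u X σ) P :=
    .of_bound ((measurable_rademacherSup hmeas).comp
      (measurable_id.prodMk measurable_const)).aestronglyMeasurable _
      (ae_of_all _ (norm_rademacherSup_le hb hm hσ))
  rw [← hT.map_eq, integral_map hT.measurable.aemeasurable (Measurable.iSup fun i => by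
    have := hmeas i; fun_prop).aestronglyMeasurable]
  calc _ ≤ ∫ q, (rademacherSup u q.2 σ + rademacherSup u q.1 σ) ∂(P.prod P) := by
        refine integral_mono_of_nonneg
          (ae_of_all _ fun q => Real.iSup_nonneg fun i => abs_nonneg _)
          ((hr.comp_snd P).add (hr.comp_fst P)) (ae_of_all _ fun q => ciSup_le fun i => ?_)
        dsimp only
        rw [← sub_div, sum_sub_sum_piecewise_eq hσ, sub_div]
        exact (abs_sub _ _).trans (add_le_add
          (le_ciSup (f := fun i => |(∑ j, σ j * u i (q.2 j)) / m|) (Finite.bddAbove_range _) i)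
          (le_ciSup (f := fun i => |(∑ j, σ j * u i (q.1 j)) / m|) (Finite.bddAbove_range _) i))
    _ = 2 * ∫ X, rademacherSup u X σ ∂P := by
        rw [integral_add (hr.comp_snd P) (hr.comp_fst P),
          integral_fun_snd (fun X => rademacherSup u X σ),
          integral_fun_fst (fun X => rademacherSup u X σ)]
        simp only [probReal_univ, one_smul]
        ring

theorem integral_supDeviation_le [Nonempty I] (hmeas : ∀ i, Measurable (u i))
    (hb : ∀ i x, |u i x| ≤ c / 2) (hm : 0 < m) :
    ∫ X, supDeviation μ u X ∂(Measure.pi fun _ : Fin m => μ)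
      ≤ 2 * ∫ q : (Fin m → 𝒳) × (Fin m → ℝ), rademacherSup u q.1 q.2
          ∂((Measure.pi fun _ => μ).prod (Measure.pi fun _ => signMeasure)) := by
  set P := Measure.pi fun _ : Fin m => μ
  set S := Measure.pi fun _ : Fin m => signMeasure
  have hr : Integrable (fun q => rademacherSup u q.1 q.2) (P.prod S) :=
    .of_bound (measurable_rademacherSup hmeas).aestronglyMeasurable (c / 2)
      ((measurePreserving_snd.quasiMeasurePreserving.ae ae_pi_signMeasure).mono
        fun q hq => norm_rademacherSup_le hb hm hq q.1)
  have h_avg (i : I) : ∫ X, (∑ j, u i (X j)) / m ∂P = ∫ x, u i x ∂μ := by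
    have hi : Integrable (u i) μ := .of_bound (hmeas i).aestronglyMeasurable _ (ae_of_all _ (hb i))
    have h_coord (j : Fin m) : ∫ X, u i (X j) ∂(Measure.pi fun _ => μ) = ∫ x, u i x ∂μ :=
      integral_comp_eval (hmeas i).aestronglyMeasurable
    rw [integral_div, integral_finsetSum _ fun j _ => integrable_comp_eval hi]
    simp only [h_coord, Finset.sum_const, Finset.card_univ, Fintype.card_fin, nsmul_eq_mul]
    field_simp
  calc ∫ X, supDeviation μ u X ∂P
      ≤ ∫ q : (Fin m → 𝒳) × (Fin m → 𝒳),
          ⨆ i, |(∑ j, u i (q.2 j)) / m - (∑ j, u i (q.1 j)) / m| ∂(P.prod P) := by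
        simpa only [supDeviation, h_avg] using integral_iSup_abs_integral_sub_le (P := P)
          (F := fun i X => (∑ j, u i (X j)) / m) (fun i => by have := hmeas i; fun_prop)
          fun i X => abs_sum_div_le hm fun j => hb i (X j)
    _ = ∫ σ, ∫ q : (Fin m → 𝒳) × (Fin m → 𝒳),
          ⨆ i, |(∑ j, u i (q.2 j)) / m - (∑ j, u i (q.1 j)) / m| ∂(P.prod P) ∂S := by simp
    _ ≤ ∫ σ, 2 * ∫ X, rademacherSup u X σ ∂P ∂S :=
        integral_mono_ae (integrable_const _) (hr.integral_prod_right.const_mul 2)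
          (ae_pi_signMeasure.mono fun σ hσ => integral_iSup_abs_avg_sub_le hmeas hb hm hσ)
    _ = 2 * ∫ q, rademacherSup u q.1 q.2 ∂(P.prod S) := by
        rw [integral_const_mul, integral_prod_symm _ hr]

theorem measureReal_two_mul_rademacher_add_lt_supDeviation_le [Nonempty I]
    (hmeas : ∀ i, Measurable (u i)) (hb : ∀ i x, |u i x| ≤ c / 2) (hm : 0 < m) {ε : ℝ}
    (hε : 0 ≤ ε) :
    (Measure.pi fun _ : Fin m => μ).real {X | 2 * ∫ q : (Fin m → 𝒳) × (Fin m → ℝ),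
        rademacherSup u q.1 q.2 ∂((Measure.pi fun _ => μ).prod (Measure.pi fun _ => signMeasure))
          + ε < supDeviation μ u X}
      ≤ exp (-2 * ε ^ 2 / (m * (c / m) ^ 2)) := by
  have := nonempty_of_isProbabilityMeasure μ
  have hc : 0 ≤ c / m := div_nonneg
    ((abs_nonneg _).trans (abs_supDeviation_le (μ := μ) hb hm fun _ => Classical.arbitrary _))
    m.cast_nonneg
  set P := Measure.pi fun _ : Fin m => μ
  have h_sub (X : Fin m → 𝒳) (hX : 2 * ∫ q : (Fin m → 𝒳) × (Fin m → ℝ), rademacherSup u q.1 q.2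
      ∂(P.prod (Measure.pi fun _ => signMeasure)) + ε < supDeviation μ u X) :
      ε ≤ supDeviation μ u X - ∫ Y, supDeviation μ u Y ∂P := by
    linarith [integral_supDeviation_le (μ := μ) hmeas hb hm]
  refine (measureReal_mono (μ := P) fun X hX => h_sub X hX).trans <|
    (measureReal_sub_integral_pi_ge_le_of_bounded_differences (measurable_supDeviation hmeas)
      (abs_supDeviation_le hb hm) (d := (c / m).toNNReal) (fun X j v => ?_) hε).trans_eq
      (by rw [Real.coe_toNNReal _ hc])
  rw [Real.coe_toNNReal _ hc]
  exact supDeviation_sub_supDeviation_update_le hb X j v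

end Rademacher

/-- High-probability bound via the (expected) Rademacher average. -/
theorem stmt9 {𝒳 : Type*} [MeasurableSpace 𝒳] (μ : Measure 𝒳) [IsProbabilityMeasure μ]
    {I : Type*} [Fintype I] [Nonempty I] (u : I → 𝒳 → ℝ) (c : ℝ)
    (hmeas : ∀ i, Measurable (u i))
    (hb : ∀ i x, |u i x| ≤ c / 2)
    (m : ℕ) (hm : 0 < m) (δ : ℝ) (hδ0 : 0 < δ) (hδ1 : δ < 1) :
    ENNReal.ofReal (1 - δ) ≤
      (Measure.pi fun _ : Fin m => μ) {X | (⨆ i, |(∫ x, u i x ∂μ) - (∑ j, u i (X j)) / m|) ≤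
        2 * (∫ q, (⨆ i, |(∑ j, q.2 j * u i (q.1 j)) / m|)
              ∂((Measure.pi fun _ : Fin m => μ).prod (Measure.pi fun _ : Fin m => signMeasure)))
          + c * Real.sqrt (Real.log (1 / δ) / (2 * m))} := by
  set R := ∫ q, rademacherSup u q.1 q.2
    ∂((Measure.pi fun _ : Fin m => μ).prod (Measure.pi fun _ : Fin m => signMeasure))
  set ε := c * √(log (1 / δ) / (2 * m))
  change _ ≤ (Measure.pi fun _ : Fin m => μ) {X | supDeviation μ u X ≤ 2 * R + ε}
  refine ofReal_one_sub_le_of_measureReal_compl_le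
    (measurableSet_le (measurable_supDeviation hmeas) measurable_const) ?_
  simp only [Set.compl_ofPred, not_le]
  have := nonempty_of_isProbabilityMeasure μ
  have hZ := abs_supDeviation_le (μ := μ) hb hm
  rcases ((abs_nonneg _).trans (hZ fun _ => Classical.arbitrary _)).eq_or_lt with rfl | hc
  · have hR : 0 ≤ R := integral_nonneg fun q => Real.iSup_nonneg fun i => abs_nonneg _
    have hε : ε = 0 := zero_mul _
    have h_empty : {X : Fin m → 𝒳 | 2 * R + ε < supDeviation μ u X} = ∅ :=
      Set.eq_empty_of_forall_notMem fun X (hX : 2 * R + ε < supDeviation μ u X) => by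
        linarith [le_abs_self (supDeviation μ u X), hZ X]
    simp [h_empty, hδ0.le]
  have hL : 0 ≤ log (1 / δ) / (2 * m) :=
    div_nonneg (log_nonneg (one_le_one_div hδ0 hδ1.le)) (by positivity)
  refine (measureReal_two_mul_rademacher_add_lt_supDeviation_le hmeas hb hm
    (by positivity)).trans_eq ?_
  rw [mul_pow, sq_sqrt hL, show -2 * (c ^ 2 * (log (1 / δ) / (2 * m))) / (m * (c / m) ^ 2)
      = -log (1 / δ) by field_simp, exp_neg, exp_log (by positivity), one_div, inv_inv]
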